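/- Let E be a real inner product space and L : E → ℝ a differentiable function whose gradient ∇L is Lipschitz with constant l ≥ 0 and satisfies ‖∇L(x)‖ ≤ δ for all x ∈ E. Let ε, λ, ρ ≥ 0, let n ∈ E, and suppose Θ_t = Θ_{t−1} − ε·(∇L(Θ_{t−1}) + λ·∇L(Θ_{t−1} + n)). Then |sup_{‖m‖ ≤ ρ} L(Θ_t + m) − L(Θ_{t−1})| ≤ ρδ + (l/2)ρ² + ε(1 + λ)δ² + (l/2)ε²(1 + λ)²δ². -/

import Mathlib

/-!
Along the segment `t ↦ x + t • v`, the first-order Taylor remainder of an `l`-smooth `L` has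
derivative `⟪g (x + t • v) - g x, v⟫`, of size at most `l t ‖v‖²`; comparing it with the
boundary function `l t² ‖v‖² / 2` gives the quadratic bound `|L (x + v) - L x| ≤ δ‖v‖ + l‖v‖²/2`
when `‖g‖ ≤ δ`. The APP step has length at most `ε (1 + λ) δ`, so one such bound for the step
`Θₜ₋₁ → Θₜ` and one for the perturbation `Θₜ → Θₜ + m` control every value `L (Θₜ + m)`, hence
also their supremum.
-/

open InnerProductSpace Set

section LipschitzGradient

variable {E : Type*} [NormedAddCommGroup E] [InnerProductSpace ℝ E] [CompleteSpace E]
  {L : E → ℝ} {g : E → E} {l : ℝ}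

theorem abs_sub_sub_inner_le_of_lipschitz_gradient (hg : ∀ x, HasGradientAt L (g x) x)
    (hlip : ∀ x y, ‖g x - g y‖ ≤ l * ‖x - y‖) (x v : E) :
    |L (x + v) - L x - ⟪g x, v⟫_ℝ| ≤ l / 2 * ‖v‖ ^ 2 := by
  set φ : ℝ → ℝ := fun t => L (x + t • v) - L x - t * ⟪g x, v⟫_ℝ
  have hφ : ∀ t, HasDerivAt φ ⟪g (x + t • v) - g x, v⟫_ℝ t := by
    intro t
    have hline : HasDerivAt (fun s : ℝ => x + s • v) v t := by
      simpa using ((hasDerivAt_id t).smul_const v).const_add x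
    have hL := (hg (x + t • v)).hasFDerivAt.comp_hasDerivAt t hline
    exact ((hL.sub_const (L x)).sub ((hasDerivAt_id t).mul_const ⟪g x, v⟫_ℝ)).congr_deriv
      (by simp [inner_sub_left])
  have hbound : ∀ t ∈ Ico (0 : ℝ) 1, ‖⟪g (x + t • v) - g x, v⟫_ℝ‖ ≤ l * ‖v‖ ^ 2 * t := by
    rintro t ⟨ht, -⟩
    calc ‖⟪g (x + t • v) - g x, v⟫_ℝ‖ ≤ ‖g (x + t • v) - g x‖ * ‖v‖ := norm_inner_le_norm _ _
      _ ≤ l * ‖x + t • v - x‖ * ‖v‖ := by gcongr; exact hlip _ _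
      _ = l * ‖v‖ ^ 2 * t := by
        rw [add_sub_cancel_left, norm_smul, Real.norm_of_nonneg ht]; ring
  have hB : ∀ t, HasDerivAt (fun s : ℝ => l / 2 * ‖v‖ ^ 2 * s ^ 2) (l * ‖v‖ ^ 2 * t) t :=
    fun t => ((hasDerivAt_pow 2 t).const_mul (l / 2 * ‖v‖ ^ 2)).congr_deriv (by ring)
  have key := image_norm_le_of_norm_deriv_right_le_deriv_boundary
    (fun t _ => (hφ t).continuousAt.continuousWithinAt) (fun t _ => (hφ t).hasDerivWithinAt)
    (by simp [φ]) hB hbound (right_mem_Icc.2 zero_le_one)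
  simpa [φ] using key

theorem abs_sub_le_of_lipschitz_gradient_of_norm_le (hg : ∀ x, HasGradientAt L (g x) x)
    (hl : 0 ≤ l) (hlip : ∀ x y, ‖g x - g y‖ ≤ l * ‖x - y‖) {δ : ℝ} (hδ : ∀ x, ‖g x‖ ≤ δ)
    (x v : E) {r : ℝ} (hv : ‖v‖ ≤ r) :
    |L (x + v) - L x| ≤ δ * r + l / 2 * r ^ 2 := by
  have hδ0 : 0 ≤ δ := (norm_nonneg _).trans (hδ x)
  have hinner : |⟪g x, v⟫_ℝ| ≤ δ * r :=
    (abs_real_inner_le_norm _ _).trans (mul_le_mul (hδ x) hv (norm_nonneg _) hδ0)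
  have hrem := abs_sub_sub_inner_le_of_lipschitz_gradient hg hlip x v
  have hsq : l / 2 * ‖v‖ ^ 2 ≤ l / 2 * r ^ 2 := by gcongr
  calc |L (x + v) - L x| = |(L (x + v) - L x - ⟪g x, v⟫_ℝ) + ⟪g x, v⟫_ℝ| := by
        rw [sub_add_cancel]
    _ ≤ |L (x + v) - L x - ⟪g x, v⟫_ℝ| + |⟪g x, v⟫_ℝ| := abs_add_le _ _
    _ ≤ δ * r + l / 2 * r ^ 2 := by linarith

end LipschitzGradient

theorem norm_smul_add_smul_le {E : Type*} [SeminormedAddCommGroup E] [NormedSpace ℝ E]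
    {ε lam δ : ℝ} (hε : 0 ≤ ε) (hlam : 0 ≤ lam) {u w : E} (hu : ‖u‖ ≤ δ) (hw : ‖w‖ ≤ δ) :
    ‖ε • (u + lam • w)‖ ≤ ε * (1 + lam) * δ := by
  calc ‖ε • (u + lam • w)‖ ≤ ε * (‖u‖ + lam * ‖w‖) := by
        rw [norm_smul, Real.norm_of_nonneg hε]
        gcongr
        exact (norm_add_le _ _).trans_eq (by rw [norm_smul, Real.norm_of_nonneg hlam])
    _ ≤ ε * (1 + lam) * δ := by nlinarith [mul_le_mul_of_nonneg_left hw hlam]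

theorem abs_sSup_image_sub_le {α : Type*} {s : Set α} (hs : s.Nonempty) {f : α → ℝ} {c B : ℝ}
    (hf : ∀ m ∈ s, |f m - c| ≤ B) : |sSup (f '' s) - c| ≤ B := by
  obtain ⟨m₀, hm₀⟩ := hs
  have hbdd : BddAbove (f '' s) := ⟨c + B, by
    rintro _ ⟨m, hm, rfl⟩
    linarith [(abs_le.1 (hf m hm)).2]⟩
  have hle : sSup (f '' s) ≤ c + B := csSup_le ⟨_, mem_image_of_mem f hm₀⟩ (by
    rintro _ ⟨m, hm, rfl⟩
    linarith [(abs_le.1 (hf m hm)).2])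
  have hge : f m₀ ≤ sSup (f '' s) := le_csSup hbdd (mem_image_of_mem f hm₀)
  exact abs_le.2 ⟨by linarith [(abs_le.1 (hf m₀ hm₀)).1], by linarith⟩

/-- **Theorem 2 (exact form).** If `L` is differentiable with `l`-Lipschitz gradient `g`
bounded by `δ`, and `Θₜ` is obtained from `Θₜ₋₁` by the APP update with learning rate `ε`,
regularization `λ` and perturbation `n`, then the gap between the maximally adversarially
perturbed loss at `Θₜ` (over the ball of radius `ρ`) and the loss at `Θₜ₋₁` is at most
`ρδ + (l/2)ρ² + ε(1+λ)δ² + (l/2)ε²(1+λ)²δ²`. -/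
theorem app_adv_loss_gap {E : Type*} [NormedAddCommGroup E] [InnerProductSpace ℝ E]
    [CompleteSpace E] (L : E → ℝ) (g : E → E) (hg : ∀ x, HasGradientAt L (g x) x)
    (l δ : ℝ) (hl : 0 ≤ l) (hlip : ∀ x y, ‖g x - g y‖ ≤ l * ‖x - y‖)
    (hδ : ∀ x, ‖g x‖ ≤ δ)
    (ε lam ρ : ℝ) (hε : 0 ≤ ε) (hlam : 0 ≤ lam) (hρ : 0 ≤ ρ)
    (n Θprev Θt : E) (hupd : Θt = Θprev - ε • (g Θprev + lam • g (Θprev + n))) :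
    |sSup ((fun m => L (Θt + m)) '' Metric.closedBall (0 : E) ρ) - L Θprev|
      ≤ ρ * δ + l / 2 * ρ ^ 2 + ε * (1 + lam) * δ ^ 2
        + l / 2 * ε ^ 2 * (1 + lam) ^ 2 * δ ^ 2 := by
  have hquad := abs_sub_le_of_lipschitz_gradient_of_norm_le hg hl hlip hδ
  have hstep : |L Θt - L Θprev| ≤ δ * (ε * (1 + lam) * δ) + l / 2 * (ε * (1 + lam) * δ) ^ 2 := by
    have hnorm : ‖Θt - Θprev‖ ≤ ε * (1 + lam) * δ := by
      rw [hupd, sub_sub_cancel_left, norm_neg]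
      exact norm_smul_add_smul_le hε hlam (hδ _) (hδ _)
    simpa using hquad Θprev (Θt - Θprev) hnorm
  refine abs_sSup_image_sub_le ⟨0, Metric.mem_closedBall_self hρ⟩ fun m hm => ?_
  have hpert := hquad Θt m (mem_closedBall_zero_iff.1 hm)
  calc |L (Θt + m) - L Θprev| ≤ |L (Θt + m) - L Θt| + |L Θt - L Θprev| := abs_sub_le _ _ _
    _ ≤ _ := by linear_combination hpert + hstep
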